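/- arXiv:1612.08008 — 2 statements merged into one kernel-verified Lean document; each statement's English description precedes it below -/
import Mathlib

section
/- Let K ≥ 1 be an integer and let Z₁, Z₂, …, Z_K be real numbers. Then max( Z₁, max_{L=2,…,K} ( Z_L − ((L−1)/L) · Z_{L−1} ) ) ≥ (2/(K+1)) · Z_K. -/
/-! The weighted sequence `L * Z L` has increments `L * Z L - (L - 1) * Z (L - 1)` of at most
`L * M`, where `M` is the maximum in question, and starts from `0 * Z 0 = 0`. Telescoping gives
`K * Z K ≤ (1 + ⋯ + K) * M = K (K + 1) / 2 * M`, and dividing by `K (K + 1) / 2` is the claim. -/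

theorem sub_le_of_forall_succ_sub_le (W : ℕ → ℝ) (M : ℝ) (K : ℕ)
    (h : ∀ n < K, W (n + 1) - W n ≤ (n + 1) * M) :
    W K - W 0 ≤ K * (K + 1) / 2 * M := by
  induction K with
  | zero => simp
  | succ K ih =>
    have hK := h K K.lt_succ_self
    have := ih fun n hn => h n (Nat.lt_succ_of_lt hn)
    push_cast
    linarith

theorem succ_mul_sub_mul_le_of_sub_div_mul_le {Z : ℕ → ℝ} {M : ℝ} (n : ℕ)
    (h : Z (n + 1) - (n / (n + 1)) * Z n ≤ M) :
    (n + 1) * Z (n + 1) - n * Z n ≤ (n + 1) * M := by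
  have hpos : (0 : ℝ) < n + 1 := by positivity
  have key : (n + 1) * ((n / (n + 1)) * Z n) = n * Z n := by field_simp
  nlinarith

/-- The maximum of `Z 1` and the quantities `Z L - ((L-1)/L) * Z (L-1)` for
`L = 2, …, K` is at least `(2/(K+1)) * Z K`.  (For `L = 1` the coefficient
`(L-1)/L` vanishes, so the `L = 1` term of the sup below is exactly `Z 1`.) -/
theorem max_increment_ge (K : ℕ) (hK : 1 ≤ K) (Z : ℕ → ℝ) :
    (2 / ((K:ℝ) + 1)) * Z K ≤
      (Finset.Icc 1 K).sup' (Finset.nonempty_Icc.2 hK)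
        (fun L => Z L - (((L:ℝ) - 1) / (L:ℝ)) * Z (L - 1)) := by
  set M := (Finset.Icc 1 K).sup' (Finset.nonempty_Icc.2 hK)
    (fun L => Z L - (((L:ℝ) - 1) / (L:ℝ)) * Z (L - 1))
  have increment : ∀ n < K, (n + 1 : ℕ) * Z (n + 1) - n * Z n ≤ (n + 1) * M := by
    intro n hn
    have h := Finset.le_sup' (fun L => Z L - (((L:ℝ) - 1) / (L:ℝ)) * Z (L - 1))
      (Finset.mem_Icc.2 ⟨n.succ_pos, hn⟩ : n + 1 ∈ Finset.Icc 1 K)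
    simp only [Nat.cast_add, Nat.cast_one, add_sub_cancel_right, Nat.add_sub_cancel] at h
    push_cast
    exact succ_mul_sub_mul_le_of_sub_div_mul_le n h
  have telescope := sub_le_of_forall_succ_sub_le (fun n => n * Z n) M K increment
  have hKpos : (0 : ℝ) < K := by exact_mod_cast hK
  have hZK : Z K ≤ (K + 1) / 2 * M := by
    simp only [Nat.cast_zero, zero_mul, sub_zero] at telescope
    nlinarith
  rw [div_mul_eq_mul_div, div_le_iff₀ (by positivity)]
  linarith
end

section
/- Let x₁, …, x_N be points in [0,1), let K be a positive integer with K ≤ N/2, and let L be an integer with 1 ≤ L ≤ K and 2LK ≤ N. Set M = ⌊N/K⌋ + 1 and define A_i = #{ 1 ≤ n ≤ N : x_n ∈ [ i·K/N, (i+1)·K/N ) } for i = 0, 1, …, ⌊N/K⌋ − 1 and A_{⌊N/K⌋} = #{ 1 ≤ n ≤ N : x_n ∈ [ ⌊N/K⌋·K/N, 1 ) }, with indices extended cyclically modulo M. Then #{ 1 ≤ l ≠ m ≤ N : ‖x_l − x_m‖ < LK/N } ≥ ∑_{i=0}^{⌊N/K⌋} ( A_i(A_i − 1) + 2·A_i·(A_{i+1}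 + A_{i+2} + ⋯ + A_{i+L−1}) ). -/
open scoped Classical

/-- Distance from a real number to the nearest integer. -/
noncomputable def nidist (x : ℝ) : ℝ := |x - round x|

/-- Pair correlation count: the number of ordered pairs `1 ≤ l ≠ m ≤ N` with
`‖x l - x m‖ < s / N`. -/
noncomputable def pairCount (x : ℕ → ℝ) (N : ℕ) (s : ℝ) : ℕ :=
  (((Finset.Icc 1 N) ×ˢ (Finset.Icc 1 N)).filter
    (fun p => p.1 ≠ p.2 ∧ nidist (x p.1 - x p.2) < s / N)).card

/-!
Sort the points into the `M` boxes and label each point by the index of its box, read in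
`ZMod M`. Two points whose labels differ by `k < L` are at circular distance `< LK/N`: without
wrap-around they lie in boxes of length `K/N` at most `k` apart, and when the labels wrap
around, the last box being shorter than `K/N` only brings the points closer through `0`.
Ordered pairs of distinct points are then classified by the difference of their labels: the
difference `0` accounts for `∑ Aᵢ(Aᵢ - 1)` pairs, a nonzero difference `d` for
`∑ Aᵢ A_{i+d}` pairs, `d` and `-d` give equally many pairs, and since `2L ≤ M` the differences
`0, ±1, …, ±(L - 1)` are distinct, so all these pairs are counted by `pairCount` without
overlap.
-/

open Finset

lemma nidist_le_abs_sub (y : ℝ) (z : ℤ) : nidist y ≤ |y - z| := round_le y z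

lemma nidist_neg (y : ℝ) : nidist (-y) = nidist y := by
  have key : ∀ y : ℝ, nidist (-y) ≤ nidist y := fun y => by
    simpa [nidist, abs_sub_comm, neg_add_eq_sub] using nidist_le_abs_sub (-y) (-round y)
  exact le_antisymm (key y) (by simpa using key (-y))

lemma pairCount_eq_card_offDiag_filter (x : ℕ → ℝ) (N : ℕ) (t : ℝ) :
    pairCount x N t = #{p ∈ (Icc 1 N).offDiag | nidist (x p.1 - x p.2) < t / N} := by
  unfold pairCount
  congr 1
  ext p
  simp [and_assoc]

lemma sum_range_natCast_eq_sum_univ {β : Type*} [AddCommMonoid β] {M : ℕ} [NeZero M]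
    (F : ZMod M → β) : ∑ i ∈ range M, F i = ∑ g, F g :=
  sum_nbij' Nat.cast ZMod.val (fun _ _ => mem_univ _) (fun g _ => mem_range.2 (ZMod.val_lt g))
    (fun _ hi => ZMod.val_natCast_of_lt (mem_range.1 hi)) (fun g _ => ZMod.natCast_zmod_val g)
    fun _ _ => rfl

lemma sum_Ico_natCast_eq_sum_Ico_add {β : Type*} [AddCommMonoid β] {M : ℕ} (F : ZMod M → β)
    (i L : ℕ) : ∑ j ∈ Ico (i + 1) (i + L), F j = ∑ k ∈ Ico 1 L, F (i + k) := by
  rw [add_comm i 1, add_comm i L, ← sum_Ico_add']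
  simp only [Nat.cast_add, add_comm]

lemma eq_of_natCast_eq {M a b : ℕ} (ha : a < M) (hb : b < M) (h : (a : ZMod M) = b) : a = b := by
  simpa [ZMod.val_natCast_of_lt ha, ZMod.val_natCast_of_lt hb] using congrArg ZMod.val h

lemma add_eq_zero_of_natCast_eq_neg {M a b : ℕ} (hab : a + b < M) (h : (a : ZMod M) = -b) :
    a + b = 0 := by
  rw [eq_neg_iff_add_eq_zero, ← Nat.cast_add, ZMod.natCast_eq_zero_iff] at h
  exact Nat.eq_zero_of_dvd_of_lt h hab

lemma eq_add_or_add_eq_add_of_natCast_eq {M a b k : ℕ} (ha : a < M) (hb : b < M) (hk : k < M)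
    (h : (a : ZMod M) = b + k) : a = b + k ∨ a + M = b + k := by
  rw [← Nat.cast_add, ZMod.natCast_eq_natCast_iff', Nat.mod_eq_of_lt ha] at h
  rcases lt_or_ge (b + k) M with hbk | hbk
  · exact Or.inl (h.trans (Nat.mod_eq_of_lt hbk))
  · rw [Nat.mod_eq_sub_mod hbk, Nat.mod_eq_of_lt (by omega)] at h
    omega

lemma natDiv_mul_div_le_one (N K : ℕ) : ((N / K : ℕ) : ℝ) * (K / N) ≤ 1 := by
  rw [mul_div_assoc']
  exact div_le_one_of_le₀ (mod_cast Nat.div_mul_le_self N K) (Nat.cast_nonneg N)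

lemma one_lt_natDiv_add_one_mul_div {N K : ℕ} (hN : 0 < N) (hK : 0 < K) :
    1 < ((N / K : ℕ) + 1 : ℝ) * (K / N) := by
  rw [mul_div_assoc', one_lt_div (mod_cast hN)]
  exact_mod_cast (add_one_mul (N / K) K).symm ▸ Nat.lt_div_mul_add hK

section Box

variable {δ y z : ℝ} {Q : ℕ}

/-- Index of the box containing `y` for the partition of `[0, 1)` into the boxes `[iδ, (i+1)δ)`,
`i < Q`, and the last box `[Qδ, 1)`. -/
noncomputable def boxIndex (δ : ℝ) (Q : ℕ) (y : ℝ) : ℕ := min ⌊y / δ⌋₊ Q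

lemma boxIndex_le (δ : ℝ) (Q : ℕ) (y : ℝ) : boxIndex δ Q y ≤ Q := min_le_right _ _

lemma boxIndex_mul_le (hδ : 0 < δ) (hy : 0 ≤ y) : (boxIndex δ Q y : ℝ) * δ ≤ y :=
  calc (boxIndex δ Q y : ℝ) * δ ≤ ⌊y / δ⌋₊ * δ := by gcongr; exact min_le_left _ _
    _ ≤ y / δ * δ := by gcongr; exact Nat.floor_le (by positivity)
    _ = y := div_mul_cancel₀ _ hδ.ne'

lemma lt_boxIndex_add_one_mul (hδ : 0 < δ) (hQ : 1 < (Q + 1) * δ) (hy : y < 1) :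
    y < (boxIndex δ Q y + 1) * δ := by
  rcases le_total ⌊y / δ⌋₊ Q with h | h
  · rw [boxIndex, min_eq_left h, ← div_lt_iff₀ hδ]
    exact Nat.lt_floor_add_one _
  · rw [boxIndex, min_eq_right h]
    exact hy.trans hQ

lemma boxIndex_eq_iff (hδ : 0 < δ) (hQ : 1 < (Q + 1) * δ) (hy : y ∈ Set.Ico 0 1) {i : ℕ}
    (hi : i ≤ Q) :
    boxIndex δ Q y = i ↔ y ∈ Set.Ico (i * δ) (if i = Q then 1 else (i + 1) * δ) := by
  have hlo := boxIndex_mul_le (Q := Q) hδ hy.1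
  have hhi := lt_boxIndex_add_one_mul hδ hQ hy.2
  constructor
  · rintro rfl
    refine ⟨hlo, ?_⟩
    split_ifs
    exacts [hy.2, hhi]
  · rintro ⟨hilo, hihi⟩
    have h₁ : i < boxIndex δ Q y + 1 := by
      exact_mod_cast lt_of_mul_lt_mul_right (hilo.trans_lt hhi) hδ.le
    have h₂ : boxIndex δ Q y < i + 1 := by
      split_ifs at hihi with hiQ
      · exact Nat.lt_succ_of_le (hiQ ▸ boxIndex_le δ Q y)
      · exact_mod_cast lt_of_mul_lt_mul_right (hlo.trans_lt hihi) hδ.le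
    omega

lemma natCast_boxIndex_eq_iff (hδ : 0 < δ) (hQ : 1 < (Q + 1) * δ) (hy : y ∈ Set.Ico 0 1)
    (i : ℕ) : (boxIndex δ Q y : ZMod (Q + 1)) = i ↔ y ∈ Set.Ico ((i % (Q + 1) : ℕ) * δ)
      (if i % (Q + 1) = Q then 1 else ((i % (Q + 1) : ℕ) + 1) * δ) := by
  rw [← boxIndex_eq_iff hδ hQ hy (Nat.lt_succ_iff.1 (Nat.mod_lt _ Q.succ_pos)),
    ZMod.natCast_eq_natCast_iff', Nat.mod_eq_of_lt (Nat.lt_succ_of_le (boxIndex_le δ Q y))]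

lemma nidist_sub_lt_of_boxIndex_eq (hδ : 0 < δ) (hQ : Q * δ ≤ 1) (hQ' : 1 < (Q + 1) * δ)
    (hy : y ∈ Set.Ico 0 1) (hz : z ∈ Set.Ico 0 1) {k L : ℕ} (hkL : k < L) (hkQ : k ≤ Q)
    (h : (boxIndex δ Q z : ZMod (Q + 1)) = boxIndex δ Q y + k) : nidist (z - y) < L * δ := by
  have hylo := boxIndex_mul_le (Q := Q) hδ hy.1
  have hyhi := lt_boxIndex_add_one_mul hδ hQ' hy.2
  have hzlo := boxIndex_mul_le (Q := Q) hδ hz.1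
  have hzhi := lt_boxIndex_add_one_mul hδ hQ' hz.2
  have hkLδ : ((k : ℝ) + 1) * δ ≤ L * δ := by gcongr; exact_mod_cast hkL
  have hkδ : 0 ≤ (k : ℝ) * δ := by positivity
  rcases eq_add_or_add_eq_add_of_natCast_eq (by have := boxIndex_le δ Q z; omega)
    (by have := boxIndex_le δ Q y; omega) (by omega) h with hbox | hbox
  · have hboxℝ : (boxIndex δ Q z : ℝ) = boxIndex δ Q y + k := by exact_mod_cast hbox
    refine (nidist_le_abs_sub (z - y) 0).trans_lt ?_
    rw [Int.cast_zero, sub_zero, abs_sub_lt_iff]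
    constructor <;> nlinarith
  · have hboxℝ : (boxIndex δ Q z : ℝ) + (Q + 1) = boxIndex δ Q y + k := by
      exact_mod_cast hbox
    have hk1 : δ ≤ (k : ℝ) * δ := by
      have : 1 ≤ k := by have := boxIndex_le δ Q y; omega
      nlinarith [(show (1 : ℝ) ≤ k by exact_mod_cast this)]
    refine (nidist_le_abs_sub (z - y) (-1)).trans_lt ?_
    rw [Int.cast_neg, Int.cast_one, sub_neg_eq_add, abs_lt]
    constructor <;> nlinarith

end Box

section PairOffsets

variable {α G : Type*} [AddCommGroup G] [DecidableEq G]
  (s : Finset α) (f : α → G)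

def pairsWithOffset (d : G) : Finset (α × α) := {p ∈ s.offDiag | f p.2 - f p.1 = d}

lemma card_pairsWithOffset_zero [Fintype G] :
    #(pairsWithOffset s f 0) = ∑ g, #({n ∈ s | f n = g}.offDiag) := by
  rw [card_eq_sum_card_fiberwise (f := fun p => f p.1) (t := univ) fun _ _ => mem_univ _]
  refine sum_congr rfl fun g _ => congrArg card ?_
  ext ⟨l, m⟩
  simp only [pairsWithOffset, mem_filter, mem_offDiag, sub_eq_zero]
  constructor
  · rintro ⟨⟨⟨hl, hm, hlm⟩, hf⟩, rfl⟩
    exact ⟨⟨hl, rfl⟩, ⟨hm, hf⟩, hlm⟩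
  · rintro ⟨⟨hl, rfl⟩, ⟨hm, hf⟩, hlm⟩
    exact ⟨⟨⟨hl, hm, hlm⟩, hf⟩, rfl⟩

lemma card_pairsWithOffset [Fintype G] {d : G} (hd : d ≠ 0) :
    #(pairsWithOffset s f d) = ∑ g, #{n ∈ s | f n = g} * #{n ∈ s | f n = g + d} := by
  rw [card_eq_sum_card_fiberwise (f := fun p => f p.1) (t := univ) fun _ _ => mem_univ _]
  refine sum_congr rfl fun g _ => (congrArg card ?_).trans (card_product _ _)
  ext ⟨l, m⟩
  simp only [pairsWithOffset, mem_filter, mem_offDiag, mem_product, sub_eq_iff_eq_add']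
  constructor
  · rintro ⟨⟨⟨hl, hm, -⟩, hf⟩, rfl⟩
    exact ⟨⟨hl, rfl⟩, hm, hf⟩
  · rintro ⟨⟨hl, rfl⟩, hm, hf⟩
    refine ⟨⟨⟨hl, hm, ?_⟩, hf⟩, rfl⟩
    rintro rfl
    exact hd (by simpa using hf)

lemma card_pairsWithOffset_neg (d : G) :
    #(pairsWithOffset s f (-d)) = #(pairsWithOffset s f d) := by
  have key : ∀ d : G, #(pairsWithOffset s f (-d)) ≤ #(pairsWithOffset s f d) := fun d => by
    refine card_le_card_of_injOn Prod.swap (fun p hp => ?_) Prod.swap_injective.injOn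
    simp only [pairsWithOffset, coe_filter, mem_offDiag, Set.mem_ofPred_eq, Prod.fst_swap,
      Prod.snd_swap] at hp ⊢
    exact ⟨⟨hp.1.2.1, hp.1.1, Ne.symm hp.1.2.2⟩, by rw [← neg_sub, hp.2, neg_neg]⟩
  exact le_antisymm (key d) (by simpa using key (-d))

lemma sum_card_pairsWithOffset_le {ι : Type*} (I : Finset ι) (φ : ι → G)
    (hφ : Set.InjOn φ I) (R : α × α → Prop) [DecidablePred R]
    (hR : ∀ i ∈ I, ∀ p ∈ pairsWithOffset s f (φ i), R p) :
    ∑ i ∈ I, #(pairsWithOffset s f (φ i)) ≤ #{p ∈ s.offDiag | R p} := by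
  rw [← card_biUnion]
  · refine card_le_card fun p hp => ?_
    obtain ⟨i, hi, hp⟩ := mem_biUnion.1 hp
    exact mem_filter.2 ⟨(mem_filter.1 hp).1, hR i hi p hp⟩
  · intro i hi j hj hij
    refine disjoint_filter.2 fun p _ hpi hpj => hij (hφ hi hj ?_)
    exact hpi.symm.trans hpj

end PairOffsets

section CyclicOffsets

/-- `inl k ↦ k` and `inr k ↦ -k` enumerate the offsets `0, ±1, …, ±(L - 1)`. -/
lemma injOn_signedOffsets {M L : ℕ} (hLM : 2 * L ≤ M + 1) :
    Set.InjOn (Sum.elim (fun k : ℕ => (k : ZMod M)) fun k : ℕ => -(k : ZMod M))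
      ((range L).disjSum (Ico 1 L) : Finset (ℕ ⊕ ℕ)) := by
  rintro (a | a) ha (b | b) hb h <;>
    simp only [mem_coe, inl_mem_disjSum, inr_mem_disjSum, mem_range, mem_Ico, Sum.elim_inl,
      Sum.elim_inr, Sum.inl.injEq, Sum.inr.injEq, reduceCtorEq] at ha hb h ⊢
  · exact eq_of_natCast_eq (by omega) (by omega) h
  · have := add_eq_zero_of_natCast_eq_neg (by omega) h
    omega
  · have := add_eq_zero_of_natCast_eq_neg (by omega) h.symm
    omega
  · exact eq_of_natCast_eq (by omega) (by omega) (neg_inj.1 h)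

variable {α : Type*} {M L : ℕ} [NeZero M] (s : Finset α) (f : α → ZMod M)

lemma sum_fiber_correlations_eq (hLM : L ≤ M) :
    ∑ g, ((#{n ∈ s | f n = g} : ℝ) * (#{n ∈ s | f n = g} - 1)
        + 2 * #{n ∈ s | f n = g} * ∑ k ∈ Ico 1 L, (#{n ∈ s | f n = g + k} : ℝ))
      = #(pairsWithOffset s f 0)
        + ∑ k ∈ Ico 1 L, ((#(pairsWithOffset s f k) : ℝ) + #(pairsWithOffset s f (-k))) := by
  rw [sum_add_distrib]
  congr 1
  · simp only [card_pairsWithOffset_zero, offDiag_card, Nat.cast_sum,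
      Nat.cast_sub (Nat.le_mul_self _), Nat.cast_mul]
    exact sum_congr rfl fun _ _ => by ring
  calc ∑ g, 2 * (#{n ∈ s | f n = g} : ℝ) * ∑ k ∈ Ico 1 L, (#{n ∈ s | f n = g + k} : ℝ)
      = ∑ k ∈ Ico 1 L, 2 * ∑ g, (#{n ∈ s | f n = g} : ℝ) * #{n ∈ s | f n = g + k} := by
        simp_rw [mul_sum, mul_assoc]
        exact sum_comm
    _ = _ := sum_congr rfl fun k hk => by
        have hk0 : (k : ZMod M) ≠ 0 := by
          rw [Ne, ZMod.natCast_eq_zero_iff]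
          exact Nat.not_dvd_of_pos_of_lt (mem_Ico.1 hk).1 (by have := (mem_Ico.1 hk).2; omega)
        rw [card_pairsWithOffset_neg, card_pairsWithOffset s f hk0, two_mul]
        push_cast
        rfl

theorem sum_fiber_correlations_le (hL : 0 < L) (hLM : 2 * L ≤ M + 1)
    (R : α × α → Prop) [DecidablePred R]
    (hR : ∀ p ∈ s.offDiag, ∀ k < L, f p.2 = f p.1 + k → R p ∧ R p.swap) :
    ∑ g, ((#{n ∈ s | f n = g} : ℝ) * (#{n ∈ s | f n = g} - 1)
        + 2 * #{n ∈ s | f n = g} * ∑ k ∈ Ico 1 L, (#{n ∈ s | f n = g + k} : ℝ))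
      ≤ #{p ∈ s.offDiag | R p} := by
  set φ : ℕ ⊕ ℕ → ZMod M := Sum.elim (fun k => k) fun k => -k
  have hRφ : ∀ i ∈ (range L).disjSum (Ico 1 L), ∀ p ∈ pairsWithOffset s f (φ i), R p := by
    rintro (k | k) hk p hp <;>
      simp only [φ, inl_mem_disjSum, inr_mem_disjSum, mem_range, mem_Ico, Sum.elim_inl,
        Sum.elim_inr, pairsWithOffset, mem_filter, sub_eq_iff_eq_add'] at hk hp
    · exact (hR p hp.1 k hk hp.2).1
    · have hswap : p.swap ∈ s.offDiag := by
        obtain ⟨h₁, h₂, h₁₂⟩ := mem_offDiag.1 hp.1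
        exact mem_offDiag.2 ⟨h₂, h₁, h₁₂.symm⟩
      exact (hR p.swap hswap k hk.2 (by simp [hp.2])).2
  have hsum : ∑ i ∈ (range L).disjSum (Ico 1 L), (#(pairsWithOffset s f (φ i)) : ℝ)
      = #(pairsWithOffset s f 0)
        + ∑ k ∈ Ico 1 L, ((#(pairsWithOffset s f k) : ℝ) + #(pairsWithOffset s f (-k))) := by
    rw [sum_disjSum, sum_range_eq_add_Ico _ hL, sum_add_distrib]
    simp only [φ, Sum.elim_inl, Sum.elim_inr, Nat.cast_zero]
    ring
  rw [sum_fiber_correlations_eq s f (by omega), ← hsum]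
  exact_mod_cast sum_card_pairsWithOffset_le s f _ φ (injOn_signedOffsets hLM) R hRφ

end CyclicOffsets

theorem pairCount_lower_bound_general (N K L : ℕ) (x : ℕ → ℝ)
    (hx : ∀ n, x n ∈ Set.Ico (0:ℝ) 1)
    (hK : 1 ≤ K) (hL1 : 1 ≤ L) (hLKN : 2 * L * K ≤ N)
    (M : ℕ) (hM : M = N / K + 1)
    (A : ℕ → ℕ)
    (hA : ∀ i, A i = ((Finset.Icc 1 N).filter (fun n =>
        x n ∈ Set.Ico (((i % M : ℕ) : ℝ) * K / N)
          (if i % M = N / K then 1 else (((i % M : ℕ) : ℝ) + 1) * K / N))).card) :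
    ∑ i ∈ Finset.range M,
        ((A i : ℝ) * ((A i : ℝ) - 1)
          + 2 * (A i : ℝ) * ∑ j ∈ Finset.Ico (i+1) (i+L), (A j : ℝ))
      ≤ (pairCount x N ((L * K : ℕ) : ℝ) : ℝ) := by
  subst hM
  set Q := N / K
  set δ : ℝ := K / N
  have hN : 0 < N := by nlinarith
  have hδ : 0 < δ := by positivity
  have hQ := one_lt_natDiv_add_one_mul_div hN hK
  set f : ℕ → ZMod (Q + 1) := fun n => boxIndex δ Q (x n)
  have hAf : ∀ i, A i = #{n ∈ Icc 1 N | f n = i} := fun i => by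
    refine (hA i).trans (congrArg card (filter_congr fun n _ => ?_))
    rw [natCast_boxIndex_eq_iff hδ hQ (hx n), mul_div_assoc, mul_div_assoc]
  have hLQ : 2 * L ≤ Q := (Nat.le_div_iff_mul_le hK).2 hLKN
  have hR : ∀ p ∈ (Icc 1 N).offDiag, ∀ k < L, f p.2 = f p.1 + k →
      nidist (x p.1 - x p.2) < ((L * K : ℕ) : ℝ) / N ∧
        nidist (x p.swap.1 - x p.swap.2) < ((L * K : ℕ) : ℝ) / N := by
    intro p _ k hk hf
    have := nidist_sub_lt_of_boxIndex_eq hδ (natDiv_mul_div_le_one N K) hQ (hx p.1) (hx p.2)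
      hk (by omega) hf
    rw [Nat.cast_mul, mul_div_assoc]
    exact ⟨by rwa [← neg_sub, nidist_neg], this⟩
  convert sum_fiber_correlations_le (Icc 1 N) f hL1 (by omega) _ hR using 1
  · rw [← sum_range_natCast_eq_sum_univ]
    simp only [hAf, sum_Ico_natCast_eq_sum_Ico_add (fun g => (#{n ∈ Icc 1 N | f n = g} : ℝ))]
  · rw [pairCount_eq_card_offDiag_filter]

/-- Lower bound for the pair correlation count at scale `L*K/N` in terms of the
box counts `A i` for the partition of `[0,1)` into `⌊N/K⌋` intervals of length
`K/N` and a final interval `[⌊N/K⌋·K/N, 1)`, indices taken cyclically modulo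
`M = ⌊N/K⌋ + 1`. -/
theorem pairCount_lower_bound (N K L : ℕ) (x : ℕ → ℝ)
    (hx : ∀ n, x n ∈ Set.Ico (0:ℝ) 1)
    (hK : 1 ≤ K) (hKN : 2 * K ≤ N) (hL1 : 1 ≤ L) (hLK : L ≤ K) (hLKN : 2 * L * K ≤ N)
    (M : ℕ) (hM : M = N / K + 1)
    (A : ℕ → ℕ)
    (hA : ∀ i, A i = ((Finset.Icc 1 N).filter (fun n =>
        x n ∈ Set.Ico (((i % M : ℕ) : ℝ) * K / N)
          (if i % M = N / K then 1 else (((i % M : ℕ) : ℝ) + 1) * K / N))).card) :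
    ∑ i ∈ Finset.range M,
        ((A i : ℝ) * ((A i : ℝ) - 1)
          + 2 * (A i : ℝ) * ∑ j ∈ Finset.Ico (i+1) (i+L), (A j : ℝ))
      ≤ (pairCount x N ((L * K : ℕ) : ℝ) : ℝ) :=
  pairCount_lower_bound_general N K L x hx hK hL1 hLKN M hM A hA
end
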